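/- Let d be an odd prime and ω : ℂ a primitive d-th root of unity. Define in Matrix (ZMod d) (ZMod d) ℂ the shift matrix X (|k⟩ ↦ |k+1⟩), the diagonal matrix Z with entries ω^k, the diagonal matrix P with entries ω^(2⁻¹·k·(k−1)), the Fourier matrix H with entries H j k = d^(−1/2)·ω^(−j·k), and P̃ = Hᴴ · P · H. Then P̃ · X · P̃ᴴ = X and P̃ · Z · P̃ᴴ = Z · X⁻¹; i.e., P̃ maps generalized Pauli operators to generalized Pauli operators under conjugation and hence is a generalized Clifford operation. -/

import Mathlib

open scoped Matrix

/-- The generalized Pauli shift matrix `X : |k⟩ ↦ |k+1⟩`. -/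
noncomputable def pauliX (d : ℕ) : Matrix (ZMod d) (ZMod d) ℂ :=
  Matrix.of fun j k => if j = k + 1 then 1 else 0

/-- The generalized Pauli `Z`, diagonal with entries `ω^k`. -/
noncomputable def pauliZ (d : ℕ) (ω : ℂ) : Matrix (ZMod d) (ZMod d) ℂ :=
  Matrix.diagonal fun k => ω ^ k.val

/-- The phase gate `P`, diagonal with entries `ω^(2⁻¹·k·(k-1))`. -/
noncomputable def phaseGate (d : ℕ) (ω : ℂ) : Matrix (ZMod d) (ZMod d) ℂ :=
  Matrix.diagonal fun k => ω ^ ((2 : ZMod d)⁻¹ * k * (k - 1)).val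

/-- The qudit Fourier matrix `H j k = d^(-1/2) · ω^(-j·k)`. -/
noncomputable def qFourier (d : ℕ) (ω : ℂ) : Matrix (ZMod d) (ZMod d) ℂ :=
  Matrix.of fun j k => (((d : ℝ) ^ (-(1 : ℝ) / 2) : ℝ) : ℂ) * ω ^ (-(j * k)).val

/-!
Conjugation by the Fourier matrix `H` exchanges the Pauli operators: `H Z = X H`,
`H X = Z(ω⁻¹) H` and `H Xᴴ = Z H`. The phase gate `P` commutes with every diagonal matrix and
satisfies `P X = X Z P`, because its quadratic phase `ω^(k(k-1)/2)` gains the factor `ω^k` from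
`k` to `k + 1`; this is where `2` has to be invertible mod `d`. Pushing `X` and `Z` through the
three factors of `P̃ = Hᴴ P H` gives `P̃ X = X P̃` and `P̃ Z = Z Xᴴ P̃`, and since `P̃` is unitary
and `Xᴴ = X⁻¹` these are the two conjugation identities.
-/

open Matrix

section Unitary

variable {R : Type*} [Monoid R] [StarMul R] {U x y : R}

theorem SemiconjBy.star_symm_left_of_mem_unitary (hU : U ∈ unitary R) (h : SemiconjBy U x y) :
    SemiconjBy (star U) y x :=
  h.units_inv_symm_left (a := Unitary.toUnits ⟨U, hU⟩)

theorem SemiconjBy.mul_mul_star_eq_of_mem_unitary (hU : U ∈ unitary R) (h : SemiconjBy U x y) :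
    U * x * star U = y := by
  rw [h.eq, mul_assoc, Unitary.mul_star_self_of_mem hU, mul_one]

end Unitary

namespace ZMod

variable {n : ℕ} [NeZero n]

theorem pow_val_add {M : Type*} [CommMonoid M] {ζ : M} (hζ : ζ ^ n = 1) (a b : ZMod n) :
    ζ ^ (a + b).val = ζ ^ a.val * ζ ^ b.val :=
  (AddChar.zmodChar n hζ).map_add_eq_mul a b

theorem conj_pow_val {K : Type*} [RCLike K] {ζ : K} (hζ : ζ ^ n = 1) (a : ZMod n) :
    starRingEnd K (ζ ^ a.val) = ζ ^ (-a).val :=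
  ((AddChar.zmodChar n hζ).map_neg_eq_conj a).symm

theorem pow_val_neg {G : Type*} [DivisionCommMonoid G] {ζ : G} (hζ : ζ ^ n = 1) (a : ZMod n) :
    ζ ^ (-a).val = (ζ ^ a.val)⁻¹ :=
  (AddChar.zmodChar n hζ).map_neg_eq_inv a

end ZMod

theorem IsPrimitiveRoot.sum_pow_val_mul {n : ℕ} [NeZero n] {R : Type*} [CommRing R] [IsDomain R]
    {ζ : R} (hζ : IsPrimitiveRoot ζ n) (c : ZMod n) :
    ∑ b : ZMod n, ζ ^ (b * c).val = if c = 0 then (n : R) else 0 := by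
  simpa [AddChar.zmodChar_apply, ZMod.card] using
    AddChar.sum_mulShift c (AddChar.zmodChar_primitive_of_primitive_root n hζ)

section Pauli

variable {d : ℕ} [NeZero d]

theorem pauliX_mul_apply (M : Matrix (ZMod d) (ZMod d) ℂ) (j k : ZMod d) :
    (pauliX d * M) j k = M (j - 1) k := by
  simp [pauliX, mul_apply, ← sub_eq_iff_eq_add]

theorem mul_pauliX_apply (M : Matrix (ZMod d) (ZMod d) ℂ) (j k : ZMod d) :
    (M * pauliX d) j k = M j (k + 1) := by
  simp [pauliX, mul_apply]

theorem mul_conjTranspose_pauliX_apply (M : Matrix (ZMod d) (ZMod d) ℂ) (j k : ZMod d) :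
    (M * (pauliX d)ᴴ) j k = M j (k - 1) := by
  simp [pauliX, mul_apply, ← sub_eq_iff_eq_add]

theorem pauliX_mem_unitaryGroup : pauliX d ∈ unitaryGroup (ZMod d) ℂ := by
  rw [mem_unitaryGroup_iff]
  ext j k
  rw [star_eq_conjTranspose, mul_conjTranspose_pauliX_apply]
  simp [pauliX, one_apply]

theorem inv_pauliX : (pauliX d)⁻¹ = (pauliX d)ᴴ :=
  inv_eq_right_inv (mem_unitaryGroup_iff.1 pauliX_mem_unitaryGroup)

variable {ω : ℂ}

theorem semiconjBy_qFourier_pauliZ (hω : ω ^ d = 1) :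
    SemiconjBy (qFourier d ω) (pauliZ d ω) (pauliX d) := by
  ext j k
  rw [pauliZ, mul_diagonal, pauliX_mul_apply]
  simp only [qFourier, of_apply, mul_assoc, ← ZMod.pow_val_add hω]
  congr 3
  ring

theorem semiconjBy_qFourier_pauliX (hω : ω ^ d = 1) :
    SemiconjBy (qFourier d ω) (pauliX d) (pauliZ d ω⁻¹) := by
  ext j k
  rw [pauliZ, mul_pauliX_apply, diagonal_mul]
  simp only [qFourier, of_apply, inv_pow, ← ZMod.pow_val_neg hω, mul_left_comm _ (_ : ℂ),
    ← ZMod.pow_val_add hω]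
  congr 3
  ring

theorem semiconjBy_qFourier_conjTranspose_pauliX (hω : ω ^ d = 1) :
    SemiconjBy (qFourier d ω) (pauliX d)ᴴ (pauliZ d ω) := by
  ext j k
  rw [pauliZ, mul_conjTranspose_pauliX_apply, diagonal_mul]
  simp only [qFourier, of_apply, mul_left_comm _ (_ : ℂ), ← ZMod.pow_val_add hω]
  congr 3
  ring

theorem qFourier_mem_unitaryGroup (hω : IsPrimitiveRoot ω d) :
    qFourier d ω ∈ unitaryGroup (ZMod d) ℂ := by
  set c : ℂ := (((d : ℝ) ^ (-(1 : ℝ) / 2) : ℝ) : ℂ)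
  have hc : c * c * d = 1 := by
    have hd : (0 : ℝ) < d := Nat.cast_pos.2 (NeZero.pos d)
    have : (d : ℝ) ^ (-(1 : ℝ) / 2) * (d : ℝ) ^ (-(1 : ℝ) / 2) * d = 1 := by
      rw [← Real.rpow_add hd]
      norm_num [Real.rpow_neg_one, hd.ne']
    rw [← Complex.ofReal_natCast, ← Complex.ofReal_mul, ← Complex.ofReal_mul, this,
      Complex.ofReal_one]
  rw [mem_unitaryGroup_iff]
  ext j k
  have hterm (b : ZMod d) :
      qFourier d ω j b * star (qFourier d ω) b k = c * c * ω ^ (b * (k - j)).val := by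
    simp only [qFourier, star_eq_conjTranspose, conjTranspose_apply, of_apply, star_mul',
      Complex.star_def, Complex.conj_ofReal, ZMod.conj_pow_val hω.pow_eq_one, neg_neg]
    rw [mul_mul_mul_comm, ← ZMod.pow_val_add hω.pow_eq_one]
    congr 3
    ring
  rw [mul_apply, Finset.sum_congr rfl fun b _ => hterm b, ← Finset.mul_sum, hω.sum_pow_val_mul,
    one_apply]
  by_cases hjk : j = k
  · simp [hjk, hc]
  · simp [hjk, sub_eq_zero, Ne.symm hjk]

theorem phaseGate_mem_unitaryGroup (hω : ω ^ d = 1) :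
    phaseGate d ω ∈ unitaryGroup (ZMod d) ℂ := by
  rw [mem_unitaryGroup_iff, phaseGate, star_eq_conjTranspose, diagonal_conjTranspose,
    diagonal_mul_diagonal, ← diagonal_one]
  congr 1
  ext k
  rw [Pi.star_apply, Complex.star_def, ZMod.conj_pow_val hω, ← ZMod.pow_val_add hω, add_neg_cancel,
    ZMod.val_zero, pow_zero]

theorem commute_phaseGate_pauliZ (ζ : ℂ) : Commute (phaseGate d ω) (pauliZ d ζ) :=
  commute_diagonal _ _

theorem semiconjBy_phaseGate_pauliX (hodd : Odd d) (hω : ω ^ d = 1) :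
    SemiconjBy (phaseGate d ω) (pauliX d) (pauliX d * pauliZ d ω) := by
  have htwo : (2 : ZMod d) * 2⁻¹ = 1 := by
    exact_mod_cast ZMod.coe_mul_inv_eq_one 2 (Nat.coprime_two_left.2 hodd)
  ext j k
  rw [phaseGate, diagonal_mul, Matrix.mul_assoc, pauliX_mul_apply, pauliZ, diagonal_mul_diagonal]
  by_cases hjk : j = k + 1
  · subst hjk
    simp only [pauliX, of_apply, add_sub_cancel_right, if_true, mul_one, diagonal_apply_eq,
      ← ZMod.pow_val_add hω]
    congr 2
    linear_combination k * htwo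
  · have hjk' : j - 1 ≠ k := fun h => hjk (by rw [← h, sub_add_cancel])
    simp [pauliX, hjk, hjk']

end Pauli

theorem phaseGateTilde_conj_general
    (d : ℕ) (hodd : Odd d) [NeZero d] (ω : ℂ)
    (hω : IsPrimitiveRoot ω d)
    (Pt : Matrix (ZMod d) (ZMod d) ℂ)
    (hPt : Pt = (qFourier d ω)ᴴ * phaseGate d ω * qFourier d ω) :
    Pt * pauliX d * Ptᴴ = pauliX d ∧
      Pt * pauliZ d ω * Ptᴴ = pauliZ d ω * (pauliX d)⁻¹ := by
  have hω₁ := hω.pow_eq_one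
  have hH := qFourier_mem_unitaryGroup hω
  have hPt_mem : Pt ∈ unitaryGroup (ZMod d) ℂ :=
    hPt ▸ mul_mem (mul_mem (Unitary.star_mem hH) (phaseGate_mem_unitaryGroup hω₁)) hH
  have hHX := semiconjBy_qFourier_pauliX hω₁
  have hHZ := semiconjBy_qFourier_pauliZ hω₁
  have hHXstar := semiconjBy_qFourier_conjTranspose_pauliX hω₁
  have hX : SemiconjBy Pt (pauliX d) (pauliX d) :=
    hPt ▸ ((hHX.star_symm_left_of_mem_unitary hH).mul_left
      (commute_phaseGate_pauliZ ω⁻¹)).mul_left hHX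
  have hZ : SemiconjBy Pt (pauliZ d ω) (pauliZ d ω * (pauliX d)ᴴ) :=
    hPt ▸ (((hHZ.star_symm_left_of_mem_unitary hH).mul_right
      (hHXstar.star_symm_left_of_mem_unitary hH)).mul_left
        (semiconjBy_phaseGate_pauliX hodd hω₁)).mul_left hHZ
  rw [inv_pauliX]
  exact ⟨hX.mul_mul_star_eq_of_mem_unitary hPt_mem, hZ.mul_mul_star_eq_of_mem_unitary hPt_mem⟩

/-- `P̃ = Hᴴ·P·H` maps generalized Pauli operators to generalized Pauli operators under
conjugation, hence is a generalized Clifford operation. -/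
theorem phaseGateTilde_conj
    (d : ℕ) (hd : Nat.Prime d) (hodd : Odd d) [NeZero d] (ω : ℂ)
    (hω : IsPrimitiveRoot ω d)
    (Pt : Matrix (ZMod d) (ZMod d) ℂ)
    (hPt : Pt = (qFourier d ω)ᴴ * phaseGate d ω * qFourier d ω) :
    Pt * pauliX d * Ptᴴ = pauliX d ∧
      Pt * pauliZ d ω * Ptᴴ = pauliZ d ω * (pauliX d)⁻¹ :=
  phaseGateTilde_conj_general d hodd ω hω Pt hPt
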